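/- arXiv:1705.04219 — 3 statements merged into one kernel-verified Lean document; each statement's English description precedes it below -/
import Mathlib

section
/- Fix α > 0, a period p ∈ ℕ with p ≥ 1, and an integer 0 ≤ q < p, and set w_j = (1+α)^{⌊(j-1)/p⌋} for j ≥ 1. Then lim_{n→∞} ( Σ_{j=1}^{np+q} w_j² ) / ( Σ_{j=1}^{np+q} w_j )² = (α/(2+α)) · ( p + α(2+α) q ) / ( p + α q )². This limit equals the (R-normalized) residual covariance of the regularized particle filter mean around the true state when resampling with bandwidth factor α every p-th step. -/
/-!
Write `r = 1 + α`. The weights are constant on blocks of length `p`, so the first `np + q` of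
them sum to `p (1 + r + ⋯ + r^{n-1}) + q rⁿ`, and their squares to the same expression in `r²`.
Divided by `rⁿ` (resp. `r²ⁿ`) these tend to `p/(r-1) + q` (resp. `p/(r²-1) + q`), and the ratio
of the squared-weight sum to the squared weight sum is unchanged by this rescaling.
-/

open Finset Filter Topology

section BlockSums

variable {M : Type*} [AddCommMonoid M]

theorem sum_Icc_one_comp_sub_one (g : ℕ → M) (N : ℕ) :
    ∑ j ∈ Icc 1 N, g (j - 1) = ∑ j ∈ range N, g j := by
  rw [← Ico_add_one_right_eq_Icc, sum_Ico_eq_sum_range]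
  simp

theorem sum_Ico_mul_add_comp_div (f : ℕ → M) {p q : ℕ} (n : ℕ) (hq : q ≤ p) :
    ∑ j ∈ Ico (n * p) (n * p + q), f (j / p) = q • f n := by
  have hblock : ∀ j ∈ Ico (n * p) (n * p + q), f (j / p) = f n := by
    intro j hj
    rw [mem_Ico] at hj
    rw [Nat.div_eq_of_lt_le hj.1 (by rw [add_mul, one_mul]; omega)]
  rw [sum_congr rfl hblock, sum_const, Nat.card_Ico, Nat.add_sub_cancel_left]

theorem sum_range_mul_add_comp_div (f : ℕ → M) {p q : ℕ} (n : ℕ) (hq : q ≤ p) :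
    ∑ j ∈ range (n * p + q), f (j / p) = p • ∑ k ∈ range n, f k + q • f n := by
  induction n generalizing q with
  | zero => simpa using sum_Ico_mul_add_comp_div f 0 hq
  | succ n ih =>
    rw [← sum_range_add_sum_Ico _ (Nat.le_add_right _ q), sum_Ico_mul_add_comp_div f _ hq,
      add_one_mul, ih le_rfl, sum_range_succ, nsmul_add]

end BlockSums

theorem tendsto_geom_block_sum_div_pow {r : ℝ} (hr : 1 < r) (c d : ℝ) :
    Tendsto (fun n : ℕ => (c * ∑ k ∈ range n, r ^ k + d * r ^ n) / r ^ n) atTop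
      (𝓝 (c / (r - 1) + d)) := by
  have hclosed : ∀ n : ℕ, (c * ∑ k ∈ range n, r ^ k + d * r ^ n) / r ^ n
      = c * (1 - r⁻¹ ^ n) / (r - 1) + d := by
    intro n
    have hrn : r ^ n ≠ 0 := pow_ne_zero _ (by positivity)
    have hr1 : r - 1 ≠ 0 := sub_ne_zero.mpr hr.ne'
    rw [geom_sum_eq hr.ne', inv_pow]
    field_simp
  have hdecay : Tendsto (fun n : ℕ => r⁻¹ ^ n) atTop (𝓝 0) :=
    tendsto_pow_atTop_nhds_zero_of_lt_one (by positivity) (inv_lt_one_of_one_lt₀ hr)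
  simp only [hclosed]
  simpa using
    ((((tendsto_const_nhds (x := (1 : ℝ))).sub hdecay).const_mul c).div_const (r - 1)).add_const d

theorem tendsto_geom_block_sum_sq_ratio {r : ℝ} (hr : 1 < r) (c d : ℝ)
    (hlim : c / (r - 1) + d ≠ 0) :
    Tendsto (fun n : ℕ => (c * ∑ k ∈ range n, (r ^ 2) ^ k + d * (r ^ 2) ^ n) /
        (c * ∑ k ∈ range n, r ^ k + d * r ^ n) ^ 2) atTop
      (𝓝 ((c / (r ^ 2 - 1) + d) / (c / (r - 1) + d) ^ 2)) := by
  have hr2 : 1 < r ^ 2 := one_lt_pow₀ hr two_ne_zero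
  have hrescale : ∀ n : ℕ,
      (c * ∑ k ∈ range n, (r ^ 2) ^ k + d * (r ^ 2) ^ n) / (r ^ 2) ^ n /
          ((c * ∑ k ∈ range n, r ^ k + d * r ^ n) / r ^ n) ^ 2
        = (c * ∑ k ∈ range n, (r ^ 2) ^ k + d * (r ^ 2) ^ n) /
          (c * ∑ k ∈ range n, r ^ k + d * r ^ n) ^ 2 := by
    intro n
    have hrn : (r ^ n) ^ 2 ≠ 0 := pow_ne_zero _ (pow_ne_zero _ (by positivity))
    rw [div_pow, ← pow_right_comm, div_div_div_cancel_right₀ hrn]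
  exact ((tendsto_geom_block_sum_div_pow hr2 c d).div
    ((tendsto_geom_block_sum_div_pow hr c d).pow 2) (pow_ne_zero 2 hlim)).congr hrescale

theorem stmt_6_general (α : ℝ) (hα : 0 < α) (p : ℕ) (q : ℕ) (hq : q < p) :
    Tendsto (fun n =>
        (∑ j ∈ Icc 1 (n * p + q), ((1 + α) ^ ((j - 1) / p)) ^ 2) /
          (∑ j ∈ Icc 1 (n * p + q), (1 + α) ^ ((j - 1) / p)) ^ 2) atTop
      (nhds ((α / (2 + α)) * (((p : ℝ) + α * (2 + α) * q) / ((p : ℝ) + α * q) ^ 2))) := by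
  have hweights : ∀ (r : ℝ) (n : ℕ), ∑ j ∈ Icc 1 (n * p + q), r ^ ((j - 1) / p)
      = p * ∑ k ∈ range n, r ^ k + q * r ^ n := by
    intro r n
    rw [sum_Icc_one_comp_sub_one (fun m => r ^ (m / p)),
      sum_range_mul_add_comp_div _ n hq.le, nsmul_eq_mul, nsmul_eq_mul]
  have hp : (0 : ℝ) < p := by exact_mod_cast (Nat.zero_le q).trans_lt hq
  have hlim := tendsto_geom_block_sum_sq_ratio (by linarith : 1 < 1 + α) p q
    (by rw [add_sub_cancel_left]; positivity)
  simp only [pow_right_comm _ _ 2, hweights]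
  convert hlim using 2
  rw [show (1 + α) ^ 2 - 1 = α * (2 + α) by ring, add_sub_cancel_left]
  have h2α : 2 + α ≠ 0 := by positivity
  have hpq : (p : ℝ) + α * q ≠ 0 := by positivity
  field_simp

/-- With weights `w_j = (1+α)^{⌊(j-1)/p⌋}`, along the subsequence `np+q` one has
`(∑ w_j²)/(∑ w_j)² → (α/(2+α)) (p + α(2+α)q)/(p+αq)²`. -/
theorem stmt_6 (α : ℝ) (hα : 0 < α) (p : ℕ) (hp : 1 ≤ p) (q : ℕ) (hq : q < p) :
    Tendsto (fun n =>
        (∑ j ∈ Icc 1 (n * p + q), ((1 + α) ^ ((j - 1) / p)) ^ 2) /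
          (∑ j ∈ Icc 1 (n * p + q), (1 + α) ^ ((j - 1) / p)) ^ 2) atTop
      (nhds ((α / (2 + α)) * (((p : ℝ) + α * (2 + α) * q) / ((p : ℝ) + α * q) ^ 2))) :=
  stmt_6_general α hα p q hq
end

section
/- Suppose there exists c > 0 such that n·α_n ≤ c for all n ≥ 1. Then the covariance recursion converges at the optimal rate: there exists a constant C > 0 such that Σ_n ≼ (C/n)·R for all n ≥ 1, where ≼ denotes the Loewner order (i.e., (C/n)·R − Σ_n is positive semidefinite). -/
/-!
In terms of the information matrices `P n = (S n)⁻¹` the recursion is affine,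
`P (n+1) = (1 + α (n+1))⁻¹ • (R⁻¹ + P n)`. Discarding `P 0 ≥ 0` gives `P n ≥ q n • R⁻¹`, where
`q (n+1) = (q n + 1) / (1 + α (n+1))`, and `n α n ≤ c` keeps `q n ≥ n / (1 + c)`. Inversion
reverses the Loewner order, so `S n ≤ (q n)⁻¹ • R ≤ ((1 + c) / n) • R`.
-/

open Matrix

open scoped MatrixOrder ComplexOrder

namespace Matrix

variable {n : Type*} [Fintype n] [DecidableEq n]

/-- The two Schur complements of the block matrix `!![B, 1; 1, A⁻¹]` are `B - A` and
`A⁻¹ - B⁻¹`, and each is positive semidefinite iff the block matrix is. -/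
theorem PosDef.inv_le_inv {𝕜 : Type*} [RCLike 𝕜] {A B : Matrix n n 𝕜} (hA : A.PosDef)
    (hAB : A ≤ B) : B⁻¹ ≤ A⁻¹ := by
  have hB : B.PosDef := by simpa using hA.add_posSemidef (Matrix.le_iff.mp hAB)
  have := hA.isUnit.invertible
  have := hB.isUnit.invertible
  have := hB.inv.isUnit.invertible
  have hblock := (PosDef.fromBlocks₂₂ B 1 hA.inv).mpr (by simpa using Matrix.le_iff.mp hAB)
  exact Matrix.le_iff.mpr <| by
    simpa using (PosDef.fromBlocks₁₁ 1 A⁻¹ hB).mp (by simpa using hblock)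

theorem mul_inv_add_mul_eq_inv_add_inv {K : Type*} [Field K] {R S : Matrix n n K}
    (hR : IsUnit R) (hS : IsUnit S) (hRS : IsUnit (R + S)) :
    R * (R + S)⁻¹ * S = (R⁻¹ + S⁻¹)⁻¹ := by
  rw [isUnit_iff_isUnit_det] at hR hS hRS
  refine (inv_eq_left_inv ?_).symm
  calc R * (R + S)⁻¹ * S * (R⁻¹ + S⁻¹) = R * (R + S)⁻¹ * (S * R⁻¹ + S * S⁻¹) := by
        simp only [Matrix.mul_add, Matrix.mul_assoc]
    _ = R * ((R + S)⁻¹ * (R + S)) * R⁻¹ := by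
        rw [mul_nonsing_inv S hS, ← mul_nonsing_inv R hR]; noncomm_ring
    _ = 1 := by rw [nonsing_inv_mul _ hRS, Matrix.mul_one, mul_nonsing_inv _ hR]

theorem inv_smul_of_ne_zero {K : Type*} [Field K] {a : K} (ha : a ≠ 0)
    {A : Matrix n n K} (hA : IsUnit A) : (a • A)⁻¹ = a⁻¹ • A⁻¹ :=
  inv_smul' A (Units.mk0 a ha) ((isUnit_iff_isUnit_det A).mp hA)

end Matrix

noncomputable def precisionWeight (α : ℕ → ℝ) : ℕ → ℝ
  | 0 => 0
  | n + 1 => (precisionWeight α n + 1) / (1 + α (n + 1))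

theorem div_le_precisionWeight {α : ℕ → ℝ} {c : ℝ} (hαnn : ∀ n, 0 ≤ α n) (hc : 0 ≤ c)
    (hαb : ∀ n : ℕ, 1 ≤ n → (n : ℝ) * α n ≤ c) (n : ℕ) :
    (n : ℝ) / (1 + c) ≤ precisionWeight α n := by
  induction n with
  | zero => simp [precisionWeight]
  | succ n ih =>
    have h1c : (0 : ℝ) < 1 + c := by linarith
    have h1α : (0 : ℝ) < 1 + α (n + 1) := by linarith [hαnn (n + 1)]
    have hαn : ((n : ℝ) + 1) * α (n + 1) ≤ c := by exact_mod_cast hαb (n + 1) (by omega)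
    have hq : (n : ℝ) ≤ precisionWeight α n * (1 + c) := (div_le_iff₀ h1c).mp ih
    rw [precisionWeight, div_le_div_iff₀ h1c h1α]
    push_cast
    nlinarith

variable {ι : Type*} [Fintype ι] [DecidableEq ι]

theorem posDef_and_precisionWeight_smul_le {R : Matrix ι ι ℝ} (hR : R.PosDef)
    {α : ℕ → ℝ} (hαnn : ∀ n, 0 ≤ α n) {S : ℕ → Matrix ι ι ℝ} (hS0 : (S 0).PosDef)
    (hrec : ∀ n, S (n + 1) = (1 + α (n + 1)) • (R * (R + S n)⁻¹ * S n)) (n : ℕ) :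
    (S n).PosDef ∧ precisionWeight α n • R⁻¹ ≤ (S n)⁻¹ := by
  induction n with
  | zero => simpa [precisionWeight, nonneg_iff_posSemidef] using ⟨hS0, hS0.inv.posSemidef⟩
  | succ n ih =>
    obtain ⟨hSn, hle⟩ := ih
    set a := 1 + α (n + 1)
    have ha : 0 < a := by linarith [hαnn (n + 1)]
    have hinfo : (R⁻¹ + (S n)⁻¹).PosDef := hR.inv.add hSn.inv
    have hSn1 : S (n + 1) = a • (R⁻¹ + (S n)⁻¹)⁻¹ := by
      rw [hrec, mul_inv_add_mul_eq_inv_add_inv hR.isUnit hSn.isUnit (hR.add hSn).isUnit]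
    have hSn1_inv : (S (n + 1))⁻¹ = a⁻¹ • (R⁻¹ + (S n)⁻¹) := by
      rw [hSn1, inv_smul_of_ne_zero ha.ne' hinfo.inv.isUnit,
        nonsing_inv_nonsing_inv _ hinfo.det_pos.ne'.isUnit]
    refine ⟨hSn1 ▸ hinfo.inv.smul ha, ?_⟩
    calc precisionWeight α (n + 1) • R⁻¹ = a⁻¹ • (R⁻¹ + precisionWeight α n • R⁻¹) := by
          rw [precisionWeight, div_eq_inv_mul]; module
      _ ≤ a⁻¹ • (R⁻¹ + (S n)⁻¹) := by gcongr
      _ = (S (n + 1))⁻¹ := hSn1_inv.symm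

theorem stmt_7_general {d : ℕ}
    (R S0 : Matrix (Fin d) (Fin d) ℝ) (hR : R.PosDef) (hS0pd : S0.PosDef)
    (α : ℕ → ℝ) (hαnn : ∀ n, 0 ≤ α n)
    (c : ℝ) (hc : 0 < c) (hαb : ∀ n : ℕ, 1 ≤ n → (n : ℝ) * α n ≤ c)
    (S : ℕ → Matrix (Fin d) (Fin d) ℝ) (hS0 : S 0 = S0)
    (hrec : ∀ n, S (n + 1) = (1 + α (n + 1)) • (R * (R + S n)⁻¹ * S n)) :
    ∃ C > 0, ∀ n : ℕ, 1 ≤ n → ((C / (n : ℝ)) • R - S n).PosSemidef := by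
  refine ⟨1 + c, by positivity, fun n hn => Matrix.le_iff.mp ?_⟩
  obtain ⟨hSn, hinfo⟩ := posDef_and_precisionWeight_smul_le hR hαnn (hS0 ▸ hS0pd) hrec n
  have hq := div_le_precisionWeight hαnn hc.le hαb n
  have hqpos : 0 < precisionWeight α n := lt_of_lt_of_le (by positivity) hq
  calc S n = ((S n)⁻¹)⁻¹ := (nonsing_inv_nonsing_inv _ hSn.det_pos.ne'.isUnit).symm
    _ ≤ (precisionWeight α n • R⁻¹)⁻¹ := (hR.inv.smul hqpos).inv_le_inv hinfo
    _ = (precisionWeight α n)⁻¹ • R := by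
        rw [inv_smul_of_ne_zero hqpos.ne' hR.inv.isUnit,
          nonsing_inv_nonsing_inv _ hR.det_pos.ne'.isUnit]
    _ ≤ ((1 + c) / n) • R := by
        refine smul_le_smul_of_nonneg_right ?_ (nonneg_iff_posSemidef.mpr hR.posSemidef)
        simpa only [inv_div] using inv_anti₀ (by positivity) hq

/-- Optimal rate: if `n α_n ≤ c` for all `n ≥ 1`, then the RPF covariance satisfies
`Σ_n ≼ (C/n) R` (Loewner order) for some `C > 0` and all `n ≥ 1`. -/
theorem stmt_7 {d : ℕ} (hd : 1 ≤ d)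
    (R S0 : Matrix (Fin d) (Fin d) ℝ) (hR : R.PosDef) (hS0pd : S0.PosDef)
    (α : ℕ → ℝ) (hα0 : α 0 = 0) (hαnn : ∀ n, 0 ≤ α n)
    (c : ℝ) (hc : 0 < c) (hαb : ∀ n : ℕ, 1 ≤ n → (n : ℝ) * α n ≤ c)
    (S : ℕ → Matrix (Fin d) (Fin d) ℝ) (hS0 : S 0 = S0)
    (hrec : ∀ n, S (n + 1) = (1 + α (n + 1)) • (R * (R + S n)⁻¹ * S n)) :
    ∃ C > 0, ∀ n : ℕ, 1 ≤ n → ((C / (n : ℝ)) • R - S n).PosSemidef :=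
  stmt_7_general R S0 hR hS0pd α hαnn c hc hαb S hS0 hrec
end

section
/- Fix a > 0 and suppose α_n = 1/(n + a) for all n ≥ 1. Then n·Σ_n converges to 2·R as n → ∞. (Explicitly, ∏_{j=1}^n (1+α_j) = (n+1+a)/(1+a) and Σ_{j=1}^n ∏_{k=0}^{j-1}(1+α_k) = (n(n+1)/2 + n a)/(1+a), so Σ_n = ((n+1+a)/(1+a)) R ( R + ((n(n+1)/2+na)/(1+a)) Σ₀ )⁻¹ Σ₀ ∼ 2R/n.) -/
open Matrix Finset Filter Topology

/-!
In information form the recursion is affine: `R (R + Σ)⁻¹ Σ = (Σ⁻¹ + R⁻¹)⁻¹`, so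
`Σ_n⁻¹ = (1 + α_n)⁻¹ (Σ_{n-1}⁻¹ + R⁻¹)`, and with `c_n = ∏_{j ≤ n} (1 + α_j)` this telescopes to
`c_n Σ_n⁻¹ = Σ₀⁻¹ + (∑_{j < n} c_j) R⁻¹`. For `α_j = 1/(j + a)` one has `c_n = (n + 1 + a)/(1 + a)`,
so `∑_{j < n} c_j ∼ n²/(2(1 + a))` while `n c_n ∼ n²/(1 + a)`; hence `Σ_n⁻¹ / n → R⁻¹ / 2`, and
continuity of matrix inversion at `R⁻¹ / 2` gives `n Σ_n → 2 R`.
-/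

namespace Matrix

variable {ι K : Type*} [Fintype ι] [DecidableEq ι]

lemma inv_smul₀ [Field K] {A : Matrix ι ι K} {c : K} (hc : c ≠ 0) (hA : IsUnit A.det) :
    (c • A)⁻¹ = c⁻¹ • A⁻¹ :=
  inv_eq_left_inv (by simp [hc, smul_smul, nonsing_inv_mul _ hA])

lemma mul_add_inv_mul_eq_inv_add_inv [CommRing K] {R S : Matrix ι ι K} (hR : IsUnit R.det)
    (hS : IsUnit S.det) : R * (R + S)⁻¹ * S = (S⁻¹ + R⁻¹)⁻¹ := by
  have hsum : S⁻¹ + R⁻¹ = S⁻¹ * (R + S) * R⁻¹ := by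
    rw [Matrix.mul_add, Matrix.add_mul, nonsing_inv_mul _ hS, Matrix.mul_assoc,
      mul_nonsing_inv _ hR, Matrix.mul_one, Matrix.one_mul, add_comm]
  rw [hsum, mul_inv_rev, mul_inv_rev, nonsing_inv_nonsing_inv _ hR,
    nonsing_inv_nonsing_inv _ hS, Matrix.mul_assoc]

lemma PosDef.isUnit_det [Field K] [PartialOrder K] [StarRing K] {A : Matrix ι ι K}
    (hA : A.PosDef) : IsUnit A.det :=
  (isUnit_iff_isUnit_det A).mp hA.isUnit

lemma tendsto_natCast_smul_of_tendsto_inv_smul_inv [NormedField K] [CharZero K]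
    {S : ℕ → Matrix ι ι K} {M : Matrix ι ι K} (hS : ∀ n, IsUnit (S n).det) (hM : IsUnit M.det)
    (h : Tendsto (fun n : ℕ => (n : K)⁻¹ • (S n)⁻¹) atTop (𝓝 M)) :
    Tendsto (fun n : ℕ => (n : K) • S n) atTop (𝓝 M⁻¹) := by
  have hcont : ContinuousAt Inv.inv M := by
    refine continuousAt_matrix_inv M ?_
    rw [Ring.inverse_eq_inv']
    exact continuousAt_inv₀ hM.ne_zero
  refine (hcont.tendsto.comp h).congr' ?_
  filter_upwards [eventually_ne_atTop 0] with n hn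
  have hn' : (n : K) ≠ 0 := Nat.cast_ne_zero.mpr hn
  rw [Function.comp_apply, inv_smul₀ (inv_ne_zero hn') ((isUnit_nonsing_inv_det_iff).mpr (hS n)),
    inv_inv, nonsing_inv_nonsing_inv _ (hS n)]

end Matrix

section CovarianceRecursion

variable {ι : Type*} [Fintype ι] [DecidableEq ι] {R : Matrix ι ι ℝ} {α : ℕ → ℝ}
  {S : ℕ → Matrix ι ι ℝ}

lemma posDef_of_covariance_rec (hR : R.PosDef) (hS0 : (S 0).PosDef)
    (hα : ∀ n, 0 < 1 + α (n + 1))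
    (hrec : ∀ n, S (n + 1) = (1 + α (n + 1)) • (R * (R + S n)⁻¹ * S n)) (n : ℕ) :
    (S n).PosDef := by
  induction n with
  | zero => exact hS0
  | succ n ih =>
    rw [hrec, mul_add_inv_mul_eq_inv_add_inv hR.isUnit_det ih.isUnit_det]
    exact (ih.inv.add hR.inv).inv.smul (hα n)

lemma inv_covariance_succ (hR : R.PosDef) (hS : ∀ n, (S n).PosDef)
    (hα : ∀ n, 0 < 1 + α (n + 1))
    (hrec : ∀ n, S (n + 1) = (1 + α (n + 1)) • (R * (R + S n)⁻¹ * S n)) (n : ℕ) :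
    (S (n + 1))⁻¹ = (1 + α (n + 1))⁻¹ • ((S n)⁻¹ + R⁻¹) := by
  have hsum : ((S n)⁻¹ + R⁻¹).PosDef := (hS n).inv.add hR.inv
  rw [hrec, mul_add_inv_mul_eq_inv_add_inv hR.isUnit_det (hS n).isUnit_det,
    inv_smul₀ (hα n).ne' hsum.inv.isUnit_det, nonsing_inv_nonsing_inv _ hsum.isUnit_det]

lemma prod_smul_inv_covariance (hR : R.PosDef) (hS : ∀ n, (S n).PosDef)
    (hα : ∀ n, 0 < 1 + α (n + 1))
    (hrec : ∀ n, S (n + 1) = (1 + α (n + 1)) • (R * (R + S n)⁻¹ * S n)) (n : ℕ) :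
    (∏ j ∈ range n, (1 + α (j + 1))) • (S n)⁻¹ =
      (S 0)⁻¹ + (∑ j ∈ range n, ∏ k ∈ range j, (1 + α (k + 1))) • R⁻¹ := by
  induction n with
  | zero => simp
  | succ n ih =>
    rw [prod_range_succ, sum_range_succ, inv_covariance_succ hR hS hα hrec, smul_smul,
      mul_assoc, mul_inv_cancel₀ (hα n).ne', mul_one, smul_add, ih, add_smul, add_assoc]

end CovarianceRecursion

section HarmonicBandwidth

variable {a : ℝ}

lemma prod_range_one_add_inv (ha : -1 < a) (n : ℕ) :
    ∏ j ∈ range n, (1 + 1 / ((j : ℝ) + 1 + a)) = (n + 1 + a) / (1 + a) := by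
  induction n with
  | zero => simp [(by linarith : 1 + a ≠ 0)]
  | succ n ih =>
    have hj : (n : ℝ) + 1 + a ≠ 0 := by linarith [(n.cast_nonneg : (0 : ℝ) ≤ n)]
    rw [prod_range_succ, ih]
    field_simp
    push_cast
    ring

lemma sum_range_div_one_add (a : ℝ) (n : ℕ) :
    ∑ j ∈ range n, ((j : ℝ) + 1 + a) / (1 + a) = (n * (n + 1) / 2 + n * a) / (1 + a) := by
  rw [← sum_div]
  congr 1
  induction n with
  | zero => simp
  | succ n ih =>
    rw [sum_range_succ, ih]
    push_cast
    ring

lemma tendsto_natCast_add_one_add_atTop (a : ℝ) :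
    Tendsto (fun n : ℕ => (n : ℝ) + 1 + a) atTop atTop :=
  tendsto_atTop_add_const_right _ _ (tendsto_atTop_add_const_right _ _ tendsto_natCast_atTop_atTop)

lemma tendsto_inv_natCast_mul_div (ha : -1 < a) :
    Tendsto (fun n : ℕ => ((n : ℝ) * ((n + 1 + a) / (1 + a)))⁻¹) atTop (𝓝 0) := by
  refine Tendsto.inv_tendsto_atTop (tendsto_natCast_atTop_atTop.atTop_mul_atTop₀ ?_)
  exact (tendsto_natCast_add_one_add_atTop a).atTop_div_const (by linarith)

lemma tendsto_inv_natCast_mul_div_mul_sum (ha : -1 < a) :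
    Tendsto (fun n : ℕ => ((n : ℝ) * ((n + 1 + a) / (1 + a)))⁻¹ *
      ((n * (n + 1) / 2 + n * a) / (1 + a))) atTop (𝓝 (1 / 2)) := by
  have hlim : Tendsto (fun n : ℕ => 1 / 2 + a / 2 * ((n : ℝ) + 1 + a)⁻¹) atTop
      (𝓝 (1 / 2 + a / 2 * 0)) :=
    tendsto_const_nhds.add (tendsto_const_nhds.mul
      (tendsto_inv_atTop_zero.comp (tendsto_natCast_add_one_add_atTop a)))
  rw [mul_zero, add_zero] at hlim
  refine hlim.congr' ?_
  filter_upwards [eventually_ne_atTop 0] with n hn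
  have hn' : (n : ℝ) ≠ 0 := Nat.cast_ne_zero.mpr hn
  have h1 : 1 + a ≠ 0 := by linarith
  have h2 : (n : ℝ) + 1 + a ≠ 0 := by linarith [(n.cast_nonneg : (0 : ℝ) ≤ n)]
  field_simp
  ring

end HarmonicBandwidth

theorem stmt_12_general {d : ℕ}
    (R S0 : Matrix (Fin d) (Fin d) ℝ) (hR : R.PosDef) (hS0pd : S0.PosDef)
    (a : ℝ) (ha : 0 < a)
    (α : ℕ → ℝ)
    (hαdef : ∀ n : ℕ, 1 ≤ n → α n = 1 / ((n : ℝ) + a))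
    (S : ℕ → Matrix (Fin d) (Fin d) ℝ) (hS0 : S 0 = S0)
    (hrec : ∀ n, S (n + 1) = (1 + α (n + 1)) • (R * (R + S n)⁻¹ * S n)) :
    Tendsto (fun n : ℕ => (n : ℝ) • S n) atTop (nhds ((2 : ℝ) • R)) := by
  have ha' : -1 < a := by linarith
  have hα : ∀ n : ℕ, α (n + 1) = 1 / ((n : ℝ) + 1 + a) := fun n => by
    rw [hαdef (n + 1) (by omega)]
    push_cast
    rfl
  have hαpos : ∀ n, 0 < 1 + α (n + 1) := fun n => by rw [hα]; positivity
  have hS := posDef_of_covariance_rec hR (hS0 ▸ hS0pd) hαpos hrec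
  have hclosed : ∀ n : ℕ, (n : ℝ)⁻¹ • (S n)⁻¹ = ((n : ℝ) * ((n + 1 + a) / (1 + a)))⁻¹ •
      (S0⁻¹ + ((n * (n + 1) / 2 + n * a) / (1 + a)) • R⁻¹) := fun n => by
    have h := prod_smul_inv_covariance hR hS hαpos hrec n
    simp only [hα, prod_range_one_add_inv ha', sum_range_div_one_add, hS0] at h
    rw [← h, smul_smul, mul_inv, mul_assoc, inv_mul_cancel₀ (by positivity), mul_one]
  have hlim : Tendsto (fun n : ℕ => (n : ℝ)⁻¹ • (S n)⁻¹) atTop (𝓝 ((2 : ℝ)⁻¹ • R⁻¹)) := by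
    simp only [hclosed, smul_add, smul_smul]
    simpa using ((tendsto_inv_natCast_mul_div ha').smul_const S0⁻¹).add
      ((tendsto_inv_natCast_mul_div_mul_sum ha').smul_const R⁻¹)
  have hR2 : ((2 : ℝ)⁻¹ • R⁻¹)⁻¹ = (2 : ℝ) • R := by
    rw [inv_smul₀ (by norm_num) hR.inv.isUnit_det, inv_inv, nonsing_inv_nonsing_inv _ hR.isUnit_det]
  rw [← hR2]
  exact tendsto_natCast_smul_of_tendsto_inv_smul_inv (fun n => (hS n).isUnit_det)
    (hR.inv.smul (by norm_num)).isUnit_det hlim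

/-- Example 1 of kernel bandwidth modulation: with `α_n = 1/(n+a)` (for a fixed
`a > 0`), the RPF covariance satisfies `n Σ_n → 2 R`. -/
theorem stmt_12 {d : ℕ} (hd : 1 ≤ d)
    (R S0 : Matrix (Fin d) (Fin d) ℝ) (hR : R.PosDef) (hS0pd : S0.PosDef)
    (a : ℝ) (ha : 0 < a)
    (α : ℕ → ℝ) (hα0 : α 0 = 0)
    (hαdef : ∀ n : ℕ, 1 ≤ n → α n = 1 / ((n : ℝ) + a))
    (S : ℕ → Matrix (Fin d) (Fin d) ℝ) (hS0 : S 0 = S0)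
    (hrec : ∀ n, S (n + 1) = (1 + α (n + 1)) • (R * (R + S n)⁻¹ * S n)) :
    Tendsto (fun n : ℕ => (n : ℝ) • S n) atTop (nhds ((2 : ℝ) • R)) :=
  stmt_12_general R S0 hR hS0pd a ha α hαdef S hS0 hrec
end
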